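/- arXiv:1603.08655 — 2 statements merged into one kernel-verified Lean document; each statement's English description precedes it below -/
import Mathlib

section
/- Let N be a reticulation-visible network and let C be a tree node component of N. Then C consists of exactly one node if and only if C is a single-leaf component, i.e., its node set is {ℓ} for some leaf ℓ of N. -/
/-!
Framework for rooted phylogenetic networks, formalized as directed graphs
given by an adjacency relation `A : V → V → Prop` on a vertex type `V`,
with a distinguished root `ρ`.  Leaves are identified with their (unique)
labels, i.e. the labelling is the identity on leaf vertices.
-/

namespace PhyloNet

variable {V : Type} {W : Type}

/-- Indegree of a vertex. -/
noncomputable def inDeg (A : V → V → Prop) (v : V) : ℕ := {u | A u v}.ncard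

/-- Outdegree of a vertex. -/
noncomputable def outDeg (A : V → V → Prop) (v : V) : ℕ := {w | A v w}.ncard

/-- `p` is a directed path (walk) from `u` to `v`, given as the list of its vertices. -/
def IsPath (A : V → V → Prop) (u v : V) (p : List V) : Prop :=
  p.Chain' A ∧ p.head? = some u ∧ p.getLast? = some v

/-- `A` with root `ρ` is a phylogenetic network: a finite rooted acyclic digraph whose
root has indegree 0 and outdegree ≥ 2, from which every node is reachable, and in which
every non-root node is either a leaf (indegree 1, outdegree 0), an internal tree node
(indegree 1, outdegree ≥ 2) or a reticulation (indegree ≥ 2, outdegree 1). -/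
structure IsNetwork (A : V → V → Prop) (ρ : V) : Prop where
  finite : Finite V
  acyclic : ∀ v, ¬ Relation.TransGen A v v
  root_indeg : inDeg A ρ = 0
  root_outdeg : 2 ≤ outDeg A ρ
  reach_from_root : ∀ v, Relation.ReflTransGen A ρ v
  degree_cond : ∀ v, v ≠ ρ →
    (inDeg A v = 1 ∧ (outDeg A v = 0 ∨ 2 ≤ outDeg A v)) ∨ (2 ≤ inDeg A v ∧ outDeg A v = 1)

/-- Reticulation node: indegree ≥ 2 and outdegree 1. -/
def IsRet (A : V → V → Prop) (v : V) : Prop := 2 ≤ inDeg A v ∧ outDeg A v = 1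

/-- Leaf: indegree 1 and outdegree 0. -/
def IsLeaf (A : V → V → Prop) (v : V) : Prop := inDeg A v = 1 ∧ outDeg A v = 0

/-- Tree node: any node that is not a reticulation node. -/
def IsTreeNode (A : V → V → Prop) (v : V) : Prop := ¬ IsRet A v

/-- `u` is visible on `v`: every directed path from the root `ρ` to `v` contains `u`. -/
def Visible (A : V → V → Prop) (ρ u v : V) : Prop := ∀ p, IsPath A ρ v p → u ∈ p

/-- A network is reticulation-visible if every reticulation node is visible on some leaf. -/
def RetVisible (A : V → V → Prop) (ρ : V) : Prop :=
  ∀ r, IsRet A r → ∃ ℓ, IsLeaf A ℓ ∧ Visible A ρ r ℓ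

/-- Undirected adjacency in the subgraph `N − R(N)` induced on tree nodes. -/
def TAdj (A : V → V → Prop) (u v : V) : Prop :=
  IsTreeNode A u ∧ IsTreeNode A v ∧ (A u v ∨ A v u)

/-- `S` is a tree node component: a connected component (ignoring directions) of the
subgraph induced on the tree nodes. -/
def IsTNC (A : V → V → Prop) (S : Set V) : Prop :=
  ∃ u, IsTreeNode A u ∧ S = {v | Relation.ReflTransGen (TAdj A) u v}

/-- `r` is the root of the tree node component `S`: it lies in `S` and has indegree 0
within `N − R(N)`, i.e. it has no tree-node parent. -/
def CompRoot (A : V → V → Prop) (S : Set V) (r : V) : Prop :=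
  r ∈ S ∧ ∀ u, IsTreeNode A u → ¬ A u r

/-- Tree node component `C'` is below tree node component `C''`. -/
def Below (A : V → V → Prop) (C' C'' : Set V) : Prop :=
  ∃ r, IsRet A r ∧ (∃ c, A r c ∧ CompRoot A C' c) ∧ (∃ p ∈ C'', A p r)

/-- A big tree node component: a tree node component with at least two nodes. -/
def BigTNC (A : V → V → Prop) (C : Set V) : Prop :=
  IsTNC A C ∧ ∃ a ∈ C, ∃ b ∈ C, a ≠ b

/-- A single-leaf component: its node set is `{ℓ}` for some leaf `ℓ`. -/
def SingleLeafTNC (A : V → V → Prop) (C : Set V) : Prop :=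
  ∃ ℓ, IsLeaf A ℓ ∧ C = {ℓ}

/-- A lowest big tree node component: a big tree node component `C` such that every
tree node component whose root is a proper descendant of the root of `C` is a
single-leaf component. -/
def LowestBig (A : V → V → Prop) (C : Set V) : Prop :=
  BigTNC A C ∧ ∀ C' r' rC, IsTNC A C' → CompRoot A C' r' → CompRoot A C rC →
    Relation.TransGen A rC r' → SingleLeafTNC A C'

/-- An inner reticulation: all of its parents lie in one and the same tree node component. -/
def InnerRet (A : V → V → Prop) (r : V) : Prop :=
  IsRet A r ∧ ∃ S, IsTNC A S ∧ ∀ p, A p r → p ∈ S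

/-- `IR(C)`: reticulations all of whose parents lie in `C`. -/
def IRset (A : V → V → Prop) (C : Set V) : Set V :=
  {r | IsRet A r ∧ ∀ p, A p r → p ∈ C}

/-- `CR(C)`: reticulations with at least one parent in `C` and at least one parent outside `C`. -/
def CRset (A : V → V → Prop) (C : Set V) : Set V :=
  {r | IsRet A r ∧ (∃ p, A p r ∧ p ∈ C) ∧ (∃ p, A p r ∧ p ∉ C)}

/-- `L_C`: the leaves of the network lying in `C` together with the children of the
inner reticulations below `C`. -/
def LCset (A : V → V → Prop) (C : Set V) : Set V :=
  {ℓ | ℓ ∈ C ∧ IsLeaf A ℓ} ∪ {x | ∃ r ∈ IRset A C, A r x}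

/-- Bicombining: every reticulation node has indegree exactly 2. -/
def Bicombining (A : V → V → Prop) : Prop := ∀ r, IsRet A r → inDeg A r = 2

/-- Galled: every reticulation node `r` has an ancestor `u` admitting two
internal-node-disjoint directed paths from `u` to `r` in which every node other
than `r` is a tree node. -/
def Galled (A : V → V → Prop) : Prop :=
  ∀ r, IsRet A r → ∃ u, Relation.TransGen A u r ∧ ∃ p₁ p₂ : List V,
    IsPath A u r p₁ ∧ IsPath A u r p₂ ∧ p₁ ≠ p₂ ∧
    (∀ x, x ∈ p₁ → x ∈ p₂ → x = u ∨ x = r) ∧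
    (∀ x ∈ p₁, x ≠ r → IsTreeNode A x) ∧ (∀ x ∈ p₂, x ≠ r → IsTreeNode A x)

/-- Restriction of a digraph to a vertex subset. -/
def Restrict (A : V → V → Prop) (S : Set V) : V → V → Prop :=
  fun a b => a ∈ S ∧ b ∈ S ∧ A a b

/-- Descendants of `u` (including `u`); the vertex set of the subnetwork `D_N(u)`. -/
def Desc (A : V → V → Prop) (u : V) : Set V := {v | Relation.ReflTransGen A u v}

/-- Binary network: the root has outdegree 2, leaves have degree 1, and every other
node has total degree 3. -/
def IsBinary (A : V → V → Prop) (ρ : V) : Prop :=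
  outDeg A ρ = 2 ∧ ∀ v, v ≠ ρ →
    (inDeg A v = 1 ∧ outDeg A v = 0) ∨ (inDeg A v = 1 ∧ outDeg A v = 2) ∨
    (inDeg A v = 2 ∧ outDeg A v = 1)

/-- A phylogenetic tree: a network with no reticulation nodes. -/
def IsPhyloTree (A : W → W → Prop) (ρ : W) : Prop :=
  IsNetwork A ρ ∧ ∀ w, ¬ IsRet A w

/-- A node with indegree 1 and outdegree 1 (a suppressible node). -/
def Deg11 (A : V → V → Prop) (v : V) : Prop := inDeg A v = 1 ∧ outDeg A v = 1

/-- There is a directed path from `a` to `b` (of length ≥ 1) all of whose internal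
nodes are suppressible. -/
def SubdivPath (A : V → V → Prop) (a b : V) : Prop :=
  ∃ p : List V, IsPath A a b p ∧ 2 ≤ p.length ∧ ∀ z ∈ p, z ≠ a → z ≠ b → Deg11 A z

/-- `φ` witnesses that the digraph `A'` on the vertex set `S` is a subdivision of the
tree `AT` restricted to the vertex set `SW`: `φ` injectively maps the tree nodes onto
the non-suppressible nodes, edges of the tree correspond exactly to directed paths
whose internal nodes are suppressible, and leaves are mapped according to the leaf
correspondence `θ` (same labels). -/
def SubdivWitness (A' : V → V → Prop) (S : Set V) (AT : W → W → Prop) (SW : Set W)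
    (θ : W → V) (φ : W → V) : Prop :=
  Set.InjOn φ SW ∧ (∀ w ∈ SW, φ w ∈ S) ∧
  (∀ x ∈ S, ¬ Deg11 (Restrict A' S) x → ∃ w ∈ SW, φ w = x) ∧
  (∀ x ∈ SW, ∀ y ∈ SW, (Restrict AT SW x y ↔ SubdivPath (Restrict A' S) (φ x) (φ y))) ∧
  (∀ w ∈ SW, outDeg (Restrict AT SW) w = 0 → φ w = θ w)

/-- The digraph `A'` on vertex set `S` is a subdivision of the tree `AT` on `SW`. -/
def IsSubdivisionOf (A' : V → V → Prop) (S : Set V) (AT : W → W → Prop) (SW : Set W)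
    (θ : W → V) : Prop :=
  ∃ φ, SubdivWitness A' S AT SW θ φ

/-- `E`, `D`, `φ` witness that the subnetwork of `A` on vertex set `S` displays the
subtree of `AT` on vertex set `SW`: `E` is a set of reticulation edges of the
subnetwork containing all but one of the incoming edges of each reticulation node of
the subnetwork, `D` is a set of deleted nodes, and `φ` witnesses that the result is a
subdivision of the subtree. -/
def DisplayWitness (A : V → V → Prop) (S : Set V) (AT : W → W → Prop) (SW : Set W)
    (θ : W → V) (E : Set (V × V)) (D : Set V) (φ : W → V) : Prop :=
  (∀ e ∈ E, Restrict A S e.1 e.2 ∧ 2 ≤ inDeg (Restrict A S) e.2) ∧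
  (∀ r ∈ S, 2 ≤ inDeg (Restrict A S) r →
     ∃ p, Restrict A S p r ∧ (p, r) ∉ E ∧ ∀ q, Restrict A S q r → q ≠ p → (q, r) ∈ E) ∧
  SubdivWitness (fun a b => Restrict A S a b ∧ (a, b) ∉ E) (S \ D) AT SW θ φ

/-- The subnetwork of `A` on vertex set `S` displays the subtree of `AT` on `SW`. -/
def DisplaysOn (A : V → V → Prop) (S : Set V) (AT : W → W → Prop) (SW : Set W)
    (θ : W → V) : Prop :=
  ∃ E D φ, DisplayWitness A S AT SW θ E D φ

/-- The leaves of the subnetwork of `A` induced on vertex set `S`. -/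
def SubLeaves (A : V → V → Prop) (S : Set V) : Set V :=
  {v | v ∈ S ∧ outDeg (Restrict A S) v = 0}

/-- `B` is a soft cluster in the subnetwork of `A` on vertex set `S`: `B` is the
cluster of some node of some phylogenetic tree displayed by that subnetwork. -/
def SoftClusterOn (A : V → V → Prop) (S : Set V) (B : Set V) : Prop :=
  ∃ (W : Type) (AT : W → W → Prop) (ρT : W) (θ : W → V),
    IsPhyloTree AT ρT ∧
    Set.BijOn θ {w | IsLeaf AT w} (SubLeaves A S) ∧
    DisplaysOn A S AT Set.univ θ ∧
    ∃ x : W, θ '' {w | IsLeaf AT w ∧ Relation.ReflTransGen AT x w} = B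

/-- `B` is a soft cluster of the node `u` of `N`: there are `E` and `D` as in the
definition of display such that `u` is a node of `(N − E) − D` and the set of leaves
of `N` below `u` in `(N − E) − D` equals `B`. -/
def SoftClusterAt (A : V → V → Prop) (u : V) (B : Set V) : Prop :=
  ∃ (E : Set (V × V)) (D : Set V),
    (∀ e ∈ E, A e.1 e.2 ∧ 2 ≤ inDeg A e.2) ∧
    (∀ r, 2 ≤ inDeg A r → ∃ p, A p r ∧ (p, r) ∉ E ∧ ∀ q, A q r → q ≠ p → (q, r) ∈ E) ∧
    (∃ (W : Type) (AT : W → W → Prop) (ρT : W) (θ : W → V),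
      IsPhyloTree AT ρT ∧ Set.BijOn θ {w | IsLeaf AT w} {v | IsLeaf A v} ∧
      IsSubdivisionOf (fun a b => A a b ∧ (a, b) ∉ E) (Set.univ \ D) AT Set.univ θ) ∧
    u ∉ D ∧
    {ℓ | IsLeaf A ℓ ∧
      Relation.ReflTransGen (fun a b => A a b ∧ (a, b) ∉ E ∧ a ∉ D ∧ b ∉ D) u ℓ} = B

/-- `w` is the lowest common ancestor of the set `X` in the (tree-like) digraph `A`. -/
def IsLCAIn (A : V → V → Prop) (X : Set V) (w : V) : Prop :=
  (∀ x ∈ X, Relation.ReflTransGen A w x) ∧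
  ∀ w', (∀ x ∈ X, Relation.ReflTransGen A w' x) → Relation.ReflTransGen A w' w

end PhyloNet

namespace PhyloNet

/-!
If `C = {x}`, every parent and child of `x` is a reticulation. Every child of `x` then has a
second parent, and induction down the acyclic network shows that every node strictly below `x`
can be reached from the root while avoiding `x`. For `x = ρ` this is absurd. Otherwise the unique
parent `q` of `x` is a reticulation whose only child is `x`; if `x` were not a leaf, the leaf `ℓ`
on which `q` is visible would lie strictly below `x`, and a root path to `ℓ` avoiding `x` would
avoid `q` as well.
-/

variable {V : Type} {A : V → V → Prop}

theorem isPath_of_reflTransGen {u v : V} (h : Relation.ReflTransGen A u v) :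
    ∃ p, IsPath A u v p := by
  obtain ⟨l, hchain, hlast⟩ := List.exists_isChain_cons_of_relationReflTransGen h
  exact ⟨u :: l, hchain, rfl, by rw [List.getLast?_eq_some_getLast (List.cons_ne_nil _ _), hlast]⟩

theorem IsPath.reflTransGen_of_mem {u v z : V} {p : List V} (hp : IsPath A u v p) (hz : z ∈ p) :
    Relation.ReflTransGen A z v := by
  refine hp.1.backwards_induction (Relation.ReflTransGen A · v) p
    (fun _ _ hab hbv => hbv.head hab) (fun hne => ?_) z hz
  have hlast := hp.2.2
  rw [List.getLast?_eq_some_getLast hne, Option.some_inj] at hlast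
  exact hlast ▸ Relation.ReflTransGen.refl

theorem IsPath.mono {B : V → V → Prop} (hBA : ∀ a b, B a b → A a b) {u v : V} {p : List V}
    (hp : IsPath B u v p) : IsPath A u v p :=
  ⟨hp.1.imp fun a b => hBA a b, hp.2⟩

theorem Visible.reflTransGen_of_le {ρ u v : V} (hvis : Visible A ρ u v) {B : V → V → Prop}
    (hBA : ∀ a b, B a b → A a b) (h : Relation.ReflTransGen B ρ v) :
    Relation.ReflTransGen B u v := by
  obtain ⟨p, hp⟩ := isPath_of_reflTransGen h
  exact hp.reflTransGen_of_mem (hvis p (hp.mono hBA))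

theorem reflTransGen_restrict_of_forall_mem {S : Set V} {u v : V}
    (h : Relation.ReflTransGen A u v)
    (hS : ∀ z, Relation.ReflTransGen A u z → Relation.ReflTransGen A z v → z ∈ S) :
    Relation.ReflTransGen (Restrict A S) u v := by
  induction h with
  | refl => exact Relation.ReflTransGen.refl
  | @tail b c hub hbc ih =>
    exact (ih fun z huz hzb => hS z huz (hzb.tail hbc)).tail
      ⟨hS b hub (.single hbc), hS c (hub.tail hbc) .refl, hbc⟩

theorem IsRet.eq_of_adj {r c c' : V} (hr : IsRet A r) (hc : A r c) (hc' : A r c') : c = c' := by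
  obtain ⟨a, ha⟩ := Set.ncard_eq_one.mp hr.2
  have hc : c ∈ {y | A r y} := hc
  have hc' : c' ∈ {y | A r y} := hc'
  rw [ha] at hc hc'
  exact hc.trans hc'.symm

theorem IsRet.exists_parent_ne {r : V} (hr : IsRet A r) (a : V) : ∃ p, A p r ∧ p ≠ a :=
  Set.exists_ne_of_one_lt_ncard hr.1 a

theorem IsRet.ne_of_isLeaf {r ℓ : V} (hr : IsRet A r) (hℓ : IsLeaf A ℓ) : r ≠ ℓ := by
  rintro rfl
  have := hr.2.symm.trans hℓ.2
  omega

theorem IsRet.adj_and_reflTransGen {B : V → V → Prop} (hBA : ∀ a b, B a b → A a b)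
    {q x ℓ : V} (hq : IsRet A q) (hqx : A q x) (h : Relation.ReflTransGen B q ℓ) (hqℓ : q ≠ ℓ) :
    B q x ∧ Relation.ReflTransGen B x ℓ := by
  rcases h.cases_head with rfl | ⟨c, hqc, hcℓ⟩
  · exact absurd rfl hqℓ
  · exact hq.eq_of_adj (hBA _ _ hqc) hqx ▸ ⟨hqc, hcℓ⟩

theorem IsTNC.isTreeNode_of_mem {S : Set V} (hS : IsTNC A S) {v : V} (hv : v ∈ S) :
    IsTreeNode A v := by
  obtain ⟨u, hu, rfl⟩ := hS
  rcases Relation.ReflTransGen.cases_tail hv with rfl | ⟨w, _, hwv⟩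
  exacts [hu, hwv.2.1]

theorem IsTNC.mem_of_tAdj {S : Set V} (hS : IsTNC A S) {u v : V} (hu : u ∈ S)
    (huv : TAdj A u v) : v ∈ S := by
  obtain ⟨w, _, rfl⟩ := hS
  exact Relation.ReflTransGen.tail hu huv

theorem isRet_of_adj_of_isTNC_singleton (hirr : ∀ v, ¬ A v v) {x y : V}
    (hC : IsTNC A {x}) (hxy : A x y ∨ A y x) : IsRet A y := by
  by_contra hy
  have hyx : y = x := hC.mem_of_tAdj rfl ⟨hC.isTreeNode_of_mem rfl, hy, hxy⟩
  subst hyx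
  exact hirr y (hxy.elim id id)

theorem IsNetwork.wellFounded {ρ : V} (hN : IsNetwork A ρ) : WellFounded A := by
  have := hN.finite
  have : IsTrans V (Relation.TransGen A) := ⟨fun _ _ _ => .trans⟩
  have : Std.Irrefl (Relation.TransGen A) := ⟨hN.acyclic⟩
  exact (Finite.wellFounded_of_trans_of_irrefl _).mono fun _ _ => Relation.TransGen.single

theorem IsNetwork.exists_adj_root {ρ : V} (hN : IsNetwork A ρ) : ∃ c, A ρ c :=
  Set.nonempty_of_ncard_ne_zero (s := {c | A ρ c}) <| by
    have := hN.root_outdeg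
    unfold outDeg at this
    omega

theorem IsNetwork.exists_adj_of_ne_root {ρ v : V} (hN : IsNetwork A ρ) (hv : v ≠ ρ) :
    ∃ p, A p v := by
  rcases (hN.reach_from_root v).cases_tail with rfl | ⟨p, _, hpv⟩
  exacts [absurd rfl hv, ⟨p, hpv⟩]

theorem reflTransGen_restrict_compl_of_transGen (hwf : WellFounded A) {ρ x : V}
    (hroot : ∀ v, Relation.ReflTransGen A ρ v) (hx : ∀ c, A x c → ∃ p, A p c ∧ p ≠ x)
    {v : V} (hv : Relation.TransGen A x v) :
    Relation.ReflTransGen (Restrict A {x}ᶜ) ρ v := by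
  induction v using hwf.transGen.induction with
  | _ v ih =>
    have hbelow_ne : ∀ z, Relation.TransGen A x z → z ≠ x := fun z hz hzx =>
      hwf.transGen.irrefl.irrefl x (hzx ▸ hz)
    obtain ⟨r, hxr, hrv⟩ := Relation.TransGen.head'_iff.mp hv
    obtain ⟨p, hpr, hpx⟩ := hx r hxr
    have hrv' : Relation.ReflTransGen (Restrict A {x}ᶜ) r v :=
      reflTransGen_restrict_of_forall_mem hrv fun z hrz _ => hbelow_ne z (.head' hxr hrz)
    have hρp : Relation.ReflTransGen (Restrict A {x}ᶜ) ρ p := by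
      by_cases hxp : Relation.TransGen A x p
      · exact ih p (.head' hpr hrv) hxp
      · refine reflTransGen_restrict_of_forall_mem (hroot p) fun z _ hzp hzx => ?_
        subst hzx
        rcases hzp.cases_head with rfl | ⟨c, hzc, hcp⟩
        exacts [hpx rfl, hxp (.head' hzc hcp)]
    exact (hρp.tail ⟨hpx, hbelow_ne r (.single hxr), hpr⟩).trans hrv'

/-- In a reticulation-visible network, a tree node component consists of exactly one
node if and only if it is a single-leaf component. -/
theorem single_node_component_iff_single_leaf {V : Type} (A : V → V → Prop) (ρ : V)
    (hN : IsNetwork A ρ) (hRV : RetVisible A ρ)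
    (C : Set V) (hC : IsTNC A C) :
    (∃ x, C = {x}) ↔ SingleLeafTNC A C := by
  refine ⟨?_, fun ⟨ℓ, _, hCℓ⟩ => ⟨ℓ, hCℓ⟩⟩
  rintro ⟨x, rfl⟩
  refine ⟨x, by_contra fun hleaf => ?_, rfl⟩
  have hwf := hN.wellFounded
  have hret : ∀ y, A x y ∨ A y x → IsRet A y :=
    fun y => isRet_of_adj_of_isTNC_singleton hwf.irrefl.irrefl hC
  have hbelow : ∀ v, Relation.TransGen A x v → Relation.ReflTransGen (Restrict A {x}ᶜ) ρ v :=
    fun v => reflTransGen_restrict_compl_of_transGen hwf hN.reach_from_root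
      fun c hc => (hret c (.inl hc)).exists_parent_ne x
  by_cases hxρ : x = ρ
  · subst hxρ
    obtain ⟨c, hc⟩ := hN.exists_adj_root
    rcases (hbelow c (.single hc)).cases_head with rfl | ⟨d, hxd, _⟩
    exacts [hwf.irrefl.irrefl _ hc, hxd.1 rfl]
  obtain ⟨q, hqx⟩ := hN.exists_adj_of_ne_root hxρ
  have hq := hret q (.inr hqx)
  obtain ⟨ℓ, hℓ, hvis⟩ := hRV q hq
  have hqℓ := hq.ne_of_isLeaf hℓ
  have hxℓ : Relation.TransGen A x ℓ := by
    obtain ⟨-, hxℓ⟩ := hq.adj_and_reflTransGen (fun _ _ => id) hqx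
      (hvis.reflTransGen_of_le (fun _ _ => id) (hN.reach_from_root ℓ)) hqℓ
    exact (Relation.reflTransGen_iff_eq_or_transGen.mp hxℓ).resolve_left fun h => hleaf (h ▸ hℓ)
  obtain ⟨⟨-, hx, -⟩, -⟩ := hq.adj_and_reflTransGen (fun _ _ h => h.2.2) hqx
    (hvis.reflTransGen_of_le (fun _ _ h => h.2.2) (hbelow ℓ hxℓ)) hqℓ
  exact hx rfl

end PhyloNet
end

section
/- Let N be a bicombining network. Then N is galled if and only if N is reticulation-visible and every reticulation node of N is inner. -/
namespace PhyloNet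

/-!
Inside a tree node component every node other than the component's root has a unique
parent, which is a tree node, so the component is a directed tree hanging from its root.
If the two parents of a reticulation `r` lie in one component, the tree paths to them from
their lowest common ancestor, extended by the edges into `r`, form the gall. Conversely the
two tree paths of a gall end in two distinct parents of `r`, which by bicombination are all
of them, and the paths connect them inside one component.

For visibility, the child `c` of a reticulation `x` is a tree node whose only parent is `x`,
so `x` is visible on the whole component of `c`. A lowest node of that component is a leaf
or the parent of a reticulation `r'`; as `r'` is inner, all its parents lie in the component,
so `x` is visible on `r'`, and induction from the bottom of the network finishes.
-/

variable {V : Type}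

open Relation

section Paths

variable {R : V → V → Prop} {u v x : V} {p : List V}

lemma IsPath.ne_nil (h : IsPath R u v p) : p ≠ [] := by
  rintro rfl
  simp [IsPath] at h

lemma IsPath.reflTransGen (h : IsPath R u v p) : ReflTransGen R u v := by
  have hne := h.ne_nil
  obtain ⟨hc, hu, hv⟩ := h
  rw [List.head?_eq_some_head hne, Option.some_inj] at hu
  rw [List.getLast?_eq_some_getLast hne, Option.some_inj] at hv
  exact hu ▸ hv ▸ List.relationReflTransGen_of_exists_isChain p hc hne

lemma exists_isPath_of_reflTransGen (h : ReflTransGen R u v) : ∃ p, IsPath R u v p := by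
  obtain ⟨l, hc, hl⟩ := List.exists_isChain_cons_of_relationReflTransGen h
  exact ⟨u :: l, hc, rfl, by rw [List.getLast?_eq_some_getLast (List.cons_ne_nil _ _), hl]⟩

lemma IsPath.imp_of_mem {S : V → V → Prop} (H : ∀ a ∈ p, ∀ b ∈ p, R a b → S a b)
    (h : IsPath R u v p) : IsPath S u v p :=
  ⟨h.1.imp_of_mem_imp fun a b ha hb => H a ha b hb, h.2⟩

lemma IsPath.append_singleton {w : V} (h : IsPath R u v p) (hvw : R v w) :
    IsPath R u w (p ++ [w]) := by
  refine ⟨h.1.append (List.isChain_singleton w) ?_, ?_, List.getLast?_concat⟩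
  · intro a ha b hb
    rw [h.2.2, Option.mem_some_iff] at ha
    rw [List.head?_cons, Option.mem_some_iff] at hb
    exact ha ▸ hb ▸ hvw
  · rw [List.head?_append_of_ne_nil _ h.ne_nil]
    exact h.2.1

lemma IsPath.split (h : IsPath R u v p) (hx : x ∈ p) :
    ∃ q t, p = q ++ x :: t ∧ IsPath R u x (q ++ [x]) ∧ IsPath R x v (x :: t) := by
  obtain ⟨q, t, rfl⟩ := List.append_of_mem hx
  obtain ⟨hc, hu, hv⟩ := h
  have hc : (q ++ x :: t).IsChain R := hc
  have hc' : ((q ++ [x]) ++ t).IsChain R := by simpa using hc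
  refine ⟨q, t, rfl, ⟨hc'.left_of_append, ?_, List.getLast?_concat⟩,
    ⟨hc.right_of_append, rfl, by rwa [List.getLast?_append_cons] at hv⟩⟩
  cases q <;> simpa using hu

lemma IsPath.reflTransGen_of_mem_s7 (h : IsPath R u v p) (hx : x ∈ p) :
    ReflTransGen R u x ∧ ReflTransGen R x v := by
  obtain ⟨_, _, _, hux, hxv⟩ := h.split hx
  exact ⟨hux.reflTransGen, hxv.reflTransGen⟩

lemma IsPath.eq_append_singleton (h : IsPath R u v p) (hvu : v ≠ u) :
    ∃ q w, p = q ++ [v] ∧ IsPath R u w q ∧ R w v := by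
  obtain ⟨hc, hu, hv⟩ := h
  rcases List.eq_nil_or_concat p with rfl | ⟨q, v', rfl⟩
  · simp at hu
  rw [List.concat_eq_append, List.getLast?_concat, Option.some_inj] at hv
  subst hv
  rcases List.eq_nil_or_concat q with rfl | ⟨q, w, rfl⟩
  · simp only [List.concat_eq_append, List.nil_append, List.head?_cons, Option.some_inj] at hu
    exact absurd hu hvu
  simp only [List.concat_eq_append, List.append_assoc, List.cons_append, List.nil_append]
    at hc hu ⊢
  obtain ⟨hq, hwv, -⟩ := List.isChain_append_cons_cons.mp hc
  refine ⟨q ++ [w], w, by simp, ⟨hq, ?_, List.getLast?_concat⟩, hwv⟩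
  cases q <;> simpa using hu

lemma IsPath.eq_singleton (hR : ∀ a, ¬ TransGen R a a) (h : IsPath R u u p) : p = [u] := by
  obtain ⟨hc, hu, hv⟩ := h
  match p, hc, hu, hv with
  | [_], _, hu, _ => simpa using hu
  | a :: b :: t, hc, hu, hv =>
    rw [List.head?_cons, Option.some_inj] at hu
    subst hu
    have hbu : IsPath R b a (b :: t) := ⟨hc.tail, rfl, by rwa [List.getLast?_cons_cons] at hv⟩
    exact absurd (TransGen.head' (List.isChain_cons_cons.mp hc).1 hbu.reflTransGen) (hR a)

end Paths

section Visibility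

variable {A : V → V → Prop} {ρ : V}

lemma visible_self (v : V) : Visible A ρ v v :=
  fun _ hp => List.mem_of_mem_getLast? hp.2.2

lemma Visible.trans {a b v : V} (hab : Visible A ρ a b) (hbv : Visible A ρ b v) :
    Visible A ρ a v := by
  intro p hp
  obtain ⟨q, t, rfl, hq, -⟩ := hp.split (hbv p hp)
  rcases List.mem_append.mp (hab _ hq) with h | h
  · exact List.mem_append_left _ h
  · exact List.mem_singleton.mp h ▸ List.mem_append_right _ List.mem_cons_self

lemma visible_of_forall_adj {a w : V} (hw : w ≠ ρ) (h : ∀ q, A q w → Visible A ρ a q) :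
    Visible A ρ a w := by
  intro p hp
  obtain ⟨q, u, rfl, hq, huw⟩ := hp.eq_append_singleton hw
  exact List.mem_append_left _ (h u huw q hq)

end Visibility

namespace IsNetwork

variable {A : V → V → Prop} {ρ : V}

lemma ne_root_of_adj (hN : IsNetwork A ρ) {u v : V} (h : A u v) : v ≠ ρ := by
  rintro rfl
  have := hN.finite
  have hu : u ∈ {w | A w v} := h
  rw [(Set.ncard_eq_zero (Set.toFinite _)).mp hN.root_indeg] at hu
  exact hu

lemma eq_of_adj_of_isTreeNode (hN : IsNetwork A ρ) {v u u' : V} (hv : IsTreeNode A v)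
    (h : A u v) (h' : A u' v) : u = u' := by
  have := hN.finite
  have hdeg : inDeg A v = 1 := by
    rcases hN.degree_cond v (hN.ne_root_of_adj h) with ⟨h1, -⟩ | hret
    · exact h1
    · exact absurd hret hv
  exact Set.ncard_le_one_iff_subsingleton.mp hdeg.le h h'

lemma wellFounded_flip_transGen (hN : IsNetwork A ρ) : WellFounded (flip (TransGen A)) := by
  have := hN.finite
  have : IsTrans V (flip (TransGen A)) := ⟨fun _ _ _ hab hbc => hbc.trans hab⟩
  have : Std.Irrefl (flip (TransGen A)) := ⟨hN.acyclic⟩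
  exact Finite.wellFounded_of_trans_of_irrefl _

lemma exists_adj_of_not_isLeaf (hN : IsNetwork A ρ) {v : V} (hv : ¬ IsLeaf A v) :
    ∃ w, A v w := by
  have := hN.finite
  suffices outDeg A v ≠ 0 from Set.nonempty_of_ncard_ne_zero this
  by_cases hvρ : v = ρ
  · subst hvρ
    have := hN.root_outdeg
    omega
  rcases hN.degree_cond v hvρ with ⟨h1, h0 | h2⟩ | ⟨-, h1⟩
  · exact absurd ⟨h1, h0⟩ hv
  all_goals omega

end IsNetwork

section Components

variable {A : V → V → Prop} {ρ : V} {u v x y c r : V}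

def TreeEdge (A : V → V → Prop) (a b : V) : Prop := IsTreeNode A a ∧ IsTreeNode A b ∧ A a b

instance : Std.Symm (TAdj A) := ⟨fun _ _ ⟨h₁, h₂, h⟩ => ⟨h₂, h₁, h.symm⟩⟩

lemma isTreeNode_of_reflTransGen_tAdj (hu : IsTreeNode A u) (h : ReflTransGen (TAdj A) u v) :
    IsTreeNode A v := by
  rcases h.cases_tail with rfl | ⟨_, -, hv⟩
  exacts [hu, hv.2.1]

lemma isTreeNode_of_reflTransGen_treeEdge (h : ReflTransGen (TreeEdge A) u v)
    (hv : IsTreeNode A v) : IsTreeNode A u := by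
  rcases h.cases_head with rfl | ⟨_, hu, -⟩
  exacts [hv, hu.1]

lemma reflTransGen_of_reflTransGen_treeEdge (h : ReflTransGen (TreeEdge A) u v) :
    ReflTransGen A u v :=
  ReflTransGen.mono (fun _ _ hab => hab.2.2) _ _ h

lemma reflTransGen_tAdj_of_isPath {p : List V} (h : IsPath A u v p)
    (ht : ∀ y ∈ p, IsTreeNode A y) : ReflTransGen (TAdj A) u v :=
  (h.imp_of_mem fun a ha b hb hab => ⟨ht a ha, ht b hb, Or.inl hab⟩).reflTransGen

/-- Going down from a node without tree-node parents, tree node components are entered only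
along tree edges, since a tree node has a single parent. -/
lemma reflTransGen_treeEdge_of_tAdj (hN : IsNetwork A ρ) (hc : ∀ u, A u c → ¬ IsTreeNode A u)
    (h : ReflTransGen (TAdj A) c v) : ReflTransGen (TreeEdge A) c v := by
  induction h with
  | refl => exact .refl
  | @tail v w _ hvw ih =>
    rcases hvw.2.2 with hvw' | hwv
    · exact ih.tail ⟨hvw.1, hvw.2.1, hvw'⟩
    rcases ih.cases_tail with rfl | ⟨y, hcy, hyv⟩
    · exact absurd hvw.2.1 (hc w hwv)
    · exact hN.eq_of_adj_of_isTreeNode hvw.1 hyv.2.2 hwv ▸ hcy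

lemma Visible.of_reflTransGen_treeEdge (hN : IsNetwork A ρ) {a : V} (hac : Visible A ρ a c)
    (h : ReflTransGen (TreeEdge A) c v) : Visible A ρ a v := by
  induction h with
  | refl => exact hac
  | tail _ hvw ih =>
    refine visible_of_forall_adj (hN.ne_root_of_adj hvw.2.2) fun q hq => ?_
    exact hN.eq_of_adj_of_isTreeNode hvw.2.1 hvw.2.2 hq ▸ ih

lemma exists_common_treeEdge_ancestor (hN : IsNetwork A ρ) (h : ReflTransGen (TAdj A) x y) :
    ∃ u, ReflTransGen (TreeEdge A) u x ∧ ReflTransGen (TreeEdge A) u y := by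
  induction h with
  | refl => exact ⟨x, .refl, .refl⟩
  | @tail v w _ hvw ih =>
    obtain ⟨u, hux, huv⟩ := ih
    rcases hvw.2.2 with hvw' | hwv
    · exact ⟨u, hux, huv.tail ⟨hvw.1, hvw.2.1, hvw'⟩⟩
    rcases huv.cases_tail with rfl | ⟨y, huy, hyv⟩
    · exact ⟨w, .head ⟨hvw.2.1, hvw.1, hwv⟩ hux, .refl⟩
    · exact ⟨u, hux, hN.eq_of_adj_of_isTreeNode hvw.1 hyv.2.2 hwv ▸ huy⟩

/-- The paths from a lowest common ancestor meet only there. -/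
lemma exists_disjoint_treeEdge_paths (hN : IsNetwork A ρ) (h : ReflTransGen (TAdj A) x y) :
    ∃ m q₁ q₂, IsPath (TreeEdge A) m x q₁ ∧ IsPath (TreeEdge A) m y q₂ ∧
      ∀ z ∈ q₁, z ∈ q₂ → z = m := by
  obtain ⟨m, ⟨hmx, hmy⟩, hmin⟩ := hN.wellFounded_flip_transGen.has_min
    {z | ReflTransGen (TreeEdge A) z x ∧ ReflTransGen (TreeEdge A) z y}
    (exists_common_treeEdge_ancestor hN h)
  obtain ⟨q₁, hq₁⟩ := exists_isPath_of_reflTransGen hmx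
  obtain ⟨q₂, hq₂⟩ := exists_isPath_of_reflTransGen hmy
  refine ⟨m, q₁, q₂, hq₁, hq₂, fun z hz₁ hz₂ => by_contra fun hzm => ?_⟩
  obtain ⟨hmz, hzx⟩ := hq₁.reflTransGen_of_mem_s7 hz₁
  refine hmin z ⟨hzx, (hq₂.reflTransGen_of_mem_s7 hz₂).2⟩ ?_
  exact (reflTransGen_iff_eq_or_transGen.mp
    (reflTransGen_of_reflTransGen_treeEdge hmz)).resolve_left hzm

lemma InnerRet.isTreeNode_of_adj {p : V} (h : InnerRet A r) (hp : A p r) : IsTreeNode A p := by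
  obtain ⟨-, -, ⟨u, hu, rfl⟩, hS⟩ := h
  exact isTreeNode_of_reflTransGen_tAdj hu (hS p hp)

lemma InnerRet.reflTransGen_tAdj {p q : V} (h : InnerRet A r) (hp : A p r) (hq : A q r) :
    ReflTransGen (TAdj A) p q := by
  obtain ⟨-, -, ⟨u, -, rfl⟩, hS⟩ := h
  exact (Std.Symm.symm _ _ (hS p hp)).trans (hS q hq)

end Components

section Galled

variable {A : V → V → Prop} {ρ : V} {r : V}

lemma galled_of_forall_innerRet (hN : IsNetwork A ρ) (hinner : ∀ r, IsRet A r → InnerRet A r) :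
    Galled A := by
  have := hN.finite
  intro r hr
  obtain ⟨p₁, p₂, h₁, h₂, hp⟩ := (Set.one_lt_ncard_iff (Set.toFinite _)).mp hr.1
  have hin := hinner r hr
  obtain ⟨m, q₁, q₂, hq₁, hq₂, hdisj⟩ :=
    exists_disjoint_treeEdge_paths hN (hin.reflTransGen_tAdj h₁ h₂)
  have htree {q : List V} {x : V} (hq : IsPath (TreeEdge A) m x q) (hx : A x r) :
      ∀ y ∈ q ++ [r], y ≠ r → IsTreeNode A y := by
    intro y hy hyr
    rcases List.mem_append.mp hy with hy | hy
    · exact isTreeNode_of_reflTransGen_treeEdge (hq.reflTransGen_of_mem_s7 hy).2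
        (hin.isTreeNode_of_adj hx)
    · exact absurd (List.mem_singleton.mp hy) hyr
  refine ⟨m, .tail' (reflTransGen_of_reflTransGen_treeEdge hq₁.reflTransGen) h₁,
    q₁ ++ [r], q₂ ++ [r], (hq₁.imp_of_mem fun _ _ _ _ h => h.2.2).append_singleton h₁,
    (hq₂.imp_of_mem fun _ _ _ _ h => h.2.2).append_singleton h₂, fun h => hp ?_, ?_,
    htree hq₁ h₁, htree hq₂ h₂⟩
  · rw [List.append_cancel_right h] at hq₁
    exact Option.some_inj.mp (hq₁.2.2.symm.trans hq₂.2.2)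
  · simp only [List.mem_append, List.mem_singleton]
    rintro z (hz₁ | rfl) (hz₂ | hz₂)
    exacts [.inl (hdisj z hz₁ hz₂), .inr hz₂, .inr rfl, .inr rfl]

lemma exists_tree_path_of_isPath (hN : IsNetwork A ρ) {u : V} {p : List V} (h : IsPath A u r p)
    (hru : r ≠ u) (ht : ∀ x ∈ p, x ≠ r → IsTreeNode A x) :
    ∃ q x, p = q ++ [r] ∧ IsPath A u x q ∧ A x r ∧ ∀ y ∈ q, IsTreeNode A y := by
  obtain ⟨q, x, rfl, hq, hxr⟩ := h.eq_append_singleton hru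
  refine ⟨q, x, rfl, hq, hxr, fun y hy => ht y (List.mem_append_left _ hy) ?_⟩
  rintro rfl
  exact hN.acyclic y (TransGen.tail' (hq.reflTransGen_of_mem_s7 hy).2 hxr)

lemma exists_ne_parents_of_galled (hN : IsNetwork A ρ) (hg : Galled A) (hr : IsRet A r) :
    ∃ x₁ x₂, x₁ ≠ x₂ ∧ A x₁ r ∧ A x₂ r ∧ IsTreeNode A x₁ ∧
      ReflTransGen (TAdj A) x₁ x₂ := by
  obtain ⟨u, hur, p₁, p₂, h₁, h₂, hne, hdisj, ht₁, ht₂⟩ := hg r hr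
  have hru : r ≠ u := fun h => hN.acyclic r (h ▸ hur)
  obtain ⟨q₁, x₁, rfl, hq₁, hx₁, hqt₁⟩ := exists_tree_path_of_isPath hN h₁ hru ht₁
  obtain ⟨q₂, x₂, rfl, hq₂, hx₂, hqt₂⟩ := exists_tree_path_of_isPath hN h₂ hru ht₂
  have hx₁q : x₁ ∈ q₁ := List.mem_of_mem_getLast? hq₁.2.2
  have hx₂q : x₂ ∈ q₂ := List.mem_of_mem_getLast? hq₂.2.2
  refine ⟨x₁, x₂, ?_, hx₁, hx₂, hqt₁ x₁ hx₁q, (Std.Symm.symm _ _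
    (reflTransGen_tAdj_of_isPath hq₁ hqt₁)).trans (reflTransGen_tAdj_of_isPath hq₂ hqt₂)⟩
  rintro rfl
  rcases hdisj x₁ (List.mem_append_left _ hx₁q) (List.mem_append_left _ hx₂q) with rfl | rfl
  · rw [hq₁.eq_singleton hN.acyclic, hq₂.eq_singleton hN.acyclic] at hne
    exact hne rfl
  · exact hqt₁ _ hx₁q hr

lemma innerRet_of_galled (hN : IsNetwork A ρ) (hbi : Bicombining A) (hg : Galled A)
    (hr : IsRet A r) : InnerRet A r := by
  have := hN.finite
  obtain ⟨x₁, x₂, hne, h₁, h₂, ht, hconn⟩ := exists_ne_parents_of_galled hN hg hr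
  have hpar : {x₁, x₂} = {p | A p r} :=
    Set.eq_of_subset_of_ncard_le (Set.insert_subset h₁ (Set.singleton_subset_iff.mpr h₂))
      ((hbi r hr).trans (Set.ncard_pair hne).symm).le (Set.toFinite _)
  refine ⟨hr, {v | ReflTransGen (TAdj A) x₁ v}, ⟨x₁, ht, rfl⟩, fun p hp => ?_⟩
  rcases (hpar ▸ hp : p ∈ ({x₁, x₂} : Set V)) with rfl | rfl
  exacts [.refl, hconn]

end Galled

section ReticulationVisibility

variable {A : V → V → Prop} {ρ : V} {c : V}

lemma exists_isLeaf_or_adj_isRet (hN : IsNetwork A ρ) (hc : IsTreeNode A c) :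
    ∃ m, ReflTransGen (TAdj A) c m ∧ (IsLeaf A m ∨ ∃ r, A m r ∧ IsRet A r) := by
  obtain ⟨m, hcm, hmin⟩ := hN.wellFounded_flip_transGen.has_min
    {v | ReflTransGen (TAdj A) c v} ⟨c, .refl⟩
  refine ⟨m, hcm, or_iff_not_imp_left.mpr fun hleaf => ?_⟩
  obtain ⟨w, hw⟩ := hN.exists_adj_of_not_isLeaf hleaf
  refine ⟨w, hw, by_contra fun hwt => hmin w ?_ (.single hw)⟩
  exact ReflTransGen.tail hcm ⟨isTreeNode_of_reflTransGen_tAdj hc hcm, hwt, Or.inl hw⟩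

lemma retVisible_of_forall_innerRet (hN : IsNetwork A ρ)
    (hinner : ∀ r, IsRet A r → InnerRet A r) : RetVisible A ρ := by
  have := hN.finite
  intro x hx
  induction x using hN.wellFounded_flip_transGen.induction with | _ x IH
  obtain ⟨c, hc⟩ := Set.ncard_eq_one.mp hx.2
  have hxc : A x c := (hc ▸ rfl : c ∈ {w | A x w})
  have hct : IsTreeNode A c := fun hcr => (hinner c hcr).isTreeNode_of_adj hxc hx
  have hcpar : ∀ u, A u c → u = x := fun u hu => hN.eq_of_adj_of_isTreeNode hct hu hxc
  have hvc : Visible A ρ x c :=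
    visible_of_forall_adj (hN.ne_root_of_adj hxc) fun u hu => by
      rw [hcpar u hu]
      exact visible_self x
  have hdir : ∀ {v}, ReflTransGen (TAdj A) c v → ReflTransGen (TreeEdge A) c v :=
    reflTransGen_treeEdge_of_tAdj hN fun u hu hut => hut (hcpar u hu ▸ hx)
  obtain ⟨m, hcm, hℓ | ⟨r', hmr', hr'⟩⟩ := exists_isLeaf_or_adj_isRet hN hct
  · exact ⟨m, hℓ, hvc.of_reflTransGen_treeEdge hN (hdir hcm)⟩
  have hvr' : Visible A ρ x r' := visible_of_forall_adj (hN.ne_root_of_adj hmr') fun q hq =>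
    hvc.of_reflTransGen_treeEdge hN (hdir (hcm.trans ((hinner r' hr').reflTransGen_tAdj hmr' hq)))
  have hxr' : TransGen A x r' :=
    .head' hxc ((reflTransGen_of_reflTransGen_treeEdge (hdir hcm)).tail hmr')
  obtain ⟨ℓ, hℓ, hv⟩ := IH r' hxr' hr'
  exact ⟨ℓ, hℓ, hvr'.trans hv⟩

end ReticulationVisibility

/-- A bicombining network is galled if and only if it is reticulation-visible and every
reticulation node is inner. -/
theorem galled_iff_retVisible_and_inner {V : Type} (A : V → V → Prop) (ρ : V)
    (hN : IsNetwork A ρ) (hbi : Bicombining A) :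
    Galled A ↔ (RetVisible A ρ ∧ ∀ r, IsRet A r → InnerRet A r) := by
  have hinner_of_galled (hg : Galled A) : ∀ r, IsRet A r → InnerRet A r :=
    fun _ hr => innerRet_of_galled hN hbi hg hr
  constructor
  · intro hg
    exact ⟨retVisible_of_forall_innerRet hN (hinner_of_galled hg), hinner_of_galled hg⟩
  · rintro ⟨-, hinner⟩
    exact galled_of_forall_innerRet hN hinner

end PhyloNet
end
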